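/- arXiv:2303.03306 — 6 statements merged into one kernel-verified Lean document; each statement's English description precedes it below -/
import Mathlib

section
/- (Homogenization) Let F ⊆ ℂ be a subfield and f₁,…,fₙ, g₁,…,gₙ : F → ℂ additive functions satisfying ∑ᵢ fᵢ(x^{pᵢ})·gᵢ(x)^{qᵢ} = 0 for all x ∈ F. Suppose the index set {1,…,n} is partitioned into classes such that within each class the value pᵢ + qᵢ is constant, and distinct classes have distinct values of pᵢ + qᵢ. Then for each class J, the sub-sum ∑_{i ∈ J} fᵢ(x^{pᵢ})·gᵢ(x)^{qᵢ} = 0 holds for all x ∈ F. -/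
theorem stmt_3 (F : Subfield ℂ) (n : ℕ) (hn : 0 < n)
    (p q : Fin n → ℕ) (hp : ∀ i, 0 < p i) (hq : ∀ i, 0 < q i)
    (f g : Fin n → F → ℂ)
    (hfadd : ∀ i, ∀ x y : F, f i (x + y) = f i x + f i y)
    (hgadd : ∀ i, ∀ x y : F, g i (x + y) = g i x + g i y)
    (heq : ∀ x : F, ∑ i, f i (x ^ p i) * (g i x) ^ q i = 0)
    -- a partition of the index set into classes on which `p i + q i` is constant,
    -- distinct classes having distinct values of `p i + q i`
    (ι : Type*) [DecidableEq ι] (cls : Fin n → ι)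
    (hconst : ∀ i j, cls i = cls j → p i + q i = p j + q j)
    (hdistinct : ∀ i j, cls i ≠ cls j → p i + q i ≠ p j + q j) :
    ∀ (c : ι) (x : F),
      ∑ i ∈ Finset.univ.filter (fun i => cls i = c),
        f i (x ^ p i) * (g i x) ^ q i = 0 := by
  intro c x
  -- additive maps as AddMonoidHoms
  let φ : Fin n → (F →+ ℂ) := fun i => AddMonoidHom.mk' (f i) (hfadd i)
  let ψ : Fin n → (F →+ ℂ) := fun i => AddMonoidHom.mk' (g i) (hgadd i)
  set a : Fin n → ℂ := fun i => f i (x ^ p i) * (g i x) ^ q i with ha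
  -- key: evaluating at m • x gives a polynomial identity in m
  have key : ∀ m : ℕ, ∑ i, (m : ℂ) ^ (p i + q i) * a i = 0 := by
    intro m
    have h := heq ((m : F) * x)
    have : ∀ i, f i (((m : F) * x) ^ p i) * (g i ((m : F) * x)) ^ q i
        = (m : ℂ) ^ (p i + q i) * a i := by
      intro i
      have h1 : ((m : F) * x) ^ p i = (m ^ p i : ℕ) • (x ^ p i) := by
        rw [mul_pow, nsmul_eq_mul]
        push_cast
        ring
      have h2 : f i (((m : F) * x) ^ p i) = (m : ℂ) ^ p i * f i (x ^ p i) := by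
        rw [h1]
        have := map_nsmul (φ i) (m ^ p i) (x ^ p i)
        simpa [φ, nsmul_eq_mul] using this
      have h3 : g i ((m : F) * x) = (m : ℂ) * g i x := by
        have h4 : (m : F) * x = m • x := by rw [nsmul_eq_mul]
        rw [h4]
        have := map_nsmul (ψ i) m x
        simpa [ψ, nsmul_eq_mul] using this
      rw [h2, h3, mul_pow, ha]
      ring
    rw [Finset.sum_congr rfl (fun i _ => this i)] at h
    exact h
  -- the polynomial ∑ C (a i) * X ^ (p i + q i) vanishes on all naturals, hence is 0
  set P : Polynomial ℂ := ∑ i, Polynomial.C (a i) * Polynomial.X ^ (p i + q i) with hP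
  have hroots : ∀ m : ℕ, P.IsRoot (m : ℂ) := by
    intro m
    simp only [Polynomial.IsRoot, hP, Polynomial.eval_finset_sum, Polynomial.eval_mul,
      Polynomial.eval_C, Polynomial.eval_pow, Polynomial.eval_X]
    simpa [mul_comm] using key m
  have hP0 : P = 0 := by
    apply Polynomial.eq_zero_of_infinite_isRoot
    exact Set.infinite_of_injective_forall_mem (f := fun m : ℕ => (m : ℂ))
      Nat.cast_injective hroots
  -- in case no index has class c
  by_cases hne : ∃ i, cls i = c
  · obtain ⟨i₀, hi₀⟩ := hne
    set d := p i₀ + q i₀ with hd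
    have hfilter : (Finset.univ.filter (fun i => cls i = c))
        = Finset.univ.filter (fun i => p i + q i = d) := by
      ext i
      simp only [Finset.mem_filter, Finset.mem_univ, true_and]
      constructor
      · intro h; exact hconst i i₀ (h.trans hi₀.symm)
      · intro h
        by_contra hcon
        exact hdistinct i i₀ (fun e => hcon (e.trans hi₀)) h
    have hcoeff : P.coeff d = ∑ i ∈ Finset.univ.filter (fun i => p i + q i = d), a i := by
      rw [hP, Polynomial.finset_sum_coeff]
      rw [Finset.sum_filter]
      apply Finset.sum_congr rfl
      intro i _
      rw [Polynomial.coeff_C_mul, Polynomial.coeff_X_pow]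
      by_cases h : p i + q i = d <;> simp [eq_comm, h]
    rw [hfilter]
    rw [← hcoeff, hP0]
    simp
  · have : (Finset.univ.filter (fun i => cls i = c)) = ∅ := by
      ext i
      simp only [Finset.mem_filter, Finset.mem_univ, true_and, Finset.notMem_empty, iff_false]
      exact fun h => hne ⟨i, h⟩
    rw [this, Finset.sum_empty]
end

section
/- (Polarization formula, special case) Let G be a commutative semigroup, S a commutative group, and A : G^n → S a symmetric n-additive function with diagonalization A*(x) = A(x,…,x). Then for all x, y₁,…,yₙ ∈ G, the iterated difference Δ_{y₁}⋯Δ_{yₙ} A*(x) = n!·A(y₁,…,yₙ), where Δ_y f(x) = f(x+y) − f(x). -/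
/-- The difference operator `Δ_y f (x) = f (x + y) - f x`. -/
def deltaOp {G S : Type*} [Add G] [Sub S] (y : G) (f : G → S) : G → S :=
  fun x => f (x + y) - f x

section Polar

variable {G S : Type*} [AddCommSemigroup G] [AddCommGroup S]

lemma deltaOp_comm (a b : G) (f : G → S) : deltaOp a (deltaOp b f) = deltaOp b (deltaOp a f) := by
  funext x
  simp only [deltaOp]
  rw [add_right_comm]
  abel

lemma foldr_delta_delta (L : List G) (y : G) (f : G → S) :
    L.foldr deltaOp (deltaOp y f) = deltaOp y (L.foldr deltaOp f) := by
  induction L with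
  | nil => rfl
  | cons a L ih => simp only [List.foldr_cons, ih, deltaOp_comm]

lemma foldr_delta_sum {ι : Type*} (L : List G) (s : Finset ι) (F : ι → G → S) :
    L.foldr deltaOp (fun x => ∑ j ∈ s, F j x) = fun x => ∑ j ∈ s, L.foldr deltaOp (F j) x := by
  induction L with
  | nil => rfl
  | cons a L ih =>
    funext x
    simp only [List.foldr_cons, ih, deltaOp, Finset.sum_sub_distrib]

lemma expand {n : ℕ} (A : (Fin n → G) → S)
    (hadd : ∀ (v : Fin n → G) (i : Fin n) (a b : G),
      A (Function.update v i (a + b)) =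
        A (Function.update v i a) + A (Function.update v i b))
    (T : Finset (Fin n)) (a b : G) (v : Fin n → G) :
    A (fun i => if i ∈ T then a + b else v i)
      = ∑ J ∈ T.powerset, A (fun i => if i ∈ T then (if i ∈ J then b else a) else v i) := by
  classical
  induction T using Finset.induction_on generalizing v with
  | empty => simp
  | @insert i₀ T hi₀ ih =>
    have hL : (fun i => if i ∈ insert i₀ T then a + b else v i)
        = Function.update (fun i => if i ∈ T then a + b else v i) i₀ (a + b) := by
      funext j
      rcases eq_or_ne j i₀ with rfl | h
      · simp [hi₀]
      · simp [Function.update_apply, h]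
    have h1 : Function.update (fun i => if i ∈ T then a + b else v i) i₀ a
        = fun i => if i ∈ T then a + b else (Function.update v i₀ a) i := by
      funext j
      rcases eq_or_ne j i₀ with rfl | h
      · simp [hi₀]
      · simp [Function.update_apply, h]
    have h2 : Function.update (fun i => if i ∈ T then a + b else v i) i₀ b
        = fun i => if i ∈ T then a + b else (Function.update v i₀ b) i := by
      funext j
      rcases eq_or_ne j i₀ with rfl | h
      · simp [hi₀]
      · simp [Function.update_apply, h]
    rw [hL, hadd, h1, h2, ih, ih, Finset.sum_powerset_insert hi₀]
    congr 1
    · refine Finset.sum_congr rfl fun J hJ => ?_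
      have hJT : J ⊆ T := Finset.mem_powerset.mp hJ
      congr 1
      funext j
      rcases eq_or_ne j i₀ with rfl | h
      · have hjJ : j ∉ J := fun h => hi₀ (hJT h)
        simp [hi₀, hjJ]
      · simp [Function.update_apply, h]
    · refine Finset.sum_congr rfl fun J hJ => ?_
      have hJT : J ⊆ T := Finset.mem_powerset.mp hJ
      congr 1
      funext j
      rcases eq_or_ne j i₀ with rfl | h
      · simp [hi₀]
      · simp [Function.update_apply, h]

end Polar
section Key
variable {G S : Type*} [AddCommSemigroup G] [AddCommGroup S]

lemma key {n : ℕ} (A : (Fin n → G) → S)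
    (hsymm : ∀ (σ : Equiv.Perm (Fin n)) (v : Fin n → G), A (v ∘ σ) = A v)
    (hadd : ∀ (v : Fin n → G) (i : Fin n) (a b : G),
      A (Function.update v i (a + b)) =
        A (Function.update v i a) + A (Function.update v i b)) :
    ∀ m : ℕ,
      (∀ (T : Finset (Fin n)) (v : Fin n → G) (u : Fin m → G) (x : G), T.card < m →
        (List.ofFn u).foldr deltaOp (fun x => A fun i => if i ∈ T then x else v i) x = 0) ∧
      (∀ (c : Fin m ↪ Fin n) (v : Fin n → G) (u : Fin m → G) (x : G),
        (List.ofFn u).foldr deltaOp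
            (fun x => A fun i => if i ∈ Finset.univ.map c then x else v i) x
          = m.factorial • A (Function.extend c u v)) := by
  intro m
  induction m with
  | zero =>
    constructor
    · intro T v u x h
      exact absurd h (Nat.not_lt_zero _)
    · intro c v u x
      have h1 : Function.extend c u v = v := by
        funext i
        exact Function.extend_apply' u v i (by rintro ⟨k, -⟩; exact k.elim0)
      simp [h1]
  | succ m ih =>
    classical
    constructor
    · -- vanishing
      intro T v u x hcard
      rw [List.ofFn_succ, List.foldr_cons]
      rcases Nat.lt_or_ge T.card m with h | h
      · simp only [deltaOp]
        rw [ih.1 T v (fun i => u i.succ) _ h, ih.1 T v (fun i => u i.succ) _ h, sub_self]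
      · have hTm : T.card = m := le_antisymm (Nat.lt_succ_iff.mp hcard) h
        set e := T.orderIsoOfFin hTm with he
        set c : Fin m ↪ Fin n :=
          (e.toEquiv.toEmbedding.trans (Function.Embedding.subtype _)) with hc
        have hmap : Finset.univ.map c = T := by
          ext i
          simp only [Finset.mem_map, Finset.mem_univ, true_and, hc,
            Function.Embedding.trans_apply, Equiv.coe_toEmbedding,
            Function.Embedding.coe_subtype]
          constructor
          · rintro ⟨k, rfl⟩
            exact (e k).2
          · intro hi
            exact ⟨e.symm ⟨i, hi⟩, by simp⟩
        rw [← hmap]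
        simp only [deltaOp]
        rw [ih.2 c v (fun i => u i.succ), ih.2 c v (fun i => u i.succ), sub_self]
    · -- main formula
      intro c v u x
      set T : Finset (Fin n) := Finset.univ.map c with hT
      have hcardT : T.card = m + 1 := by simp [hT]
      rw [List.ofFn_succ, List.foldr_cons, ← foldr_delta_delta]
      have hδ : deltaOp (u 0) (fun x => A fun i => if i ∈ T then x else v i)
          = fun x => ∑ J ∈ T.powerset.erase ∅,
              A fun i => if i ∈ T \ J then x else (fun i' => if i' ∈ J then u 0 else v i') i := by
        funext x'
        simp only [deltaOp]
        rw [expand A hadd T x' (u 0) v,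
          ← Finset.add_sum_erase _ _ (Finset.empty_mem_powerset T)]
        have h0 : (A fun i => if i ∈ T then (if i ∈ (∅ : Finset (Fin n)) then u 0 else x') else v i)
            = A fun i => if i ∈ T then x' else v i := by
          congr 1
        rw [h0, add_sub_cancel_left]
        refine Finset.sum_congr rfl fun J hJ => ?_
        have hJT : J ⊆ T := Finset.mem_powerset.mp (Finset.mem_of_mem_erase hJ)
        congr 1
        funext i
        by_cases hiJ : i ∈ J
        · simp [hiJ, hJT hiJ, Finset.mem_sdiff]
        · by_cases hiT : i ∈ T <;> simp [hiJ, hiT, Finset.mem_sdiff]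
      rw [hδ, foldr_delta_sum]
      beta_reduce
      have hQsub : T.image (fun a => ({a} : Finset (Fin n))) ⊆ T.powerset.erase ∅ := by
        intro J hJ
        obtain ⟨a, ha, rfl⟩ := Finset.mem_image.mp hJ
        exact Finset.mem_erase.mpr ⟨Finset.singleton_ne_empty a,
          Finset.mem_powerset.mpr (Finset.singleton_subset_iff.mpr ha)⟩
      rw [← Finset.sum_subset hQsub (by
        intro J hJ hJQ
        have hJT : J ⊆ T := Finset.mem_powerset.mp (Finset.mem_of_mem_erase hJ)
        have hJne : J ≠ ∅ := (Finset.mem_erase.mp hJ).1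
        have hcard2 : 2 ≤ J.card := by
          rcases Nat.lt_or_ge J.card 2 with h2 | h2
          · interval_cases hc : J.card
            · exact absurd (Finset.card_eq_zero.mp hc) hJne
            · obtain ⟨a, rfl⟩ := Finset.card_eq_one.mp hc
              exact absurd (Finset.mem_image.mpr ⟨a, Finset.singleton_subset_iff.mp hJT, rfl⟩) hJQ
          · exact h2
        have hJle : J.card ≤ T.card := Finset.card_le_card hJT
        have : (T \ J).card < m := by
          rw [Finset.card_sdiff_of_subset hJT]
          omega
        exact ih.1 (T \ J) (fun i' => if i' ∈ J then u 0 else v i') (fun i => u i.succ) x this)]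
      rw [Finset.sum_image (fun a _ b _ h => Finset.singleton_injective h), hT, Finset.sum_map]
      have hterm : ∀ k : Fin (m + 1),
          (List.ofFn fun i => u i.succ).foldr deltaOp
            (fun x => A fun i => if i ∈ T \ {c k} then x
              else (fun i' => if i' ∈ ({c k} : Finset (Fin n)) then u 0 else v i') i) x
          = m.factorial • A (Function.extend c u v) := by
        intro k
        set c' : Fin m ↪ Fin n := (Fin.succAboveEmb k).trans c with hc'
        have hset : T \ {c k} = Finset.univ.map c' := by
          ext i
          simp only [Finset.mem_sdiff, Finset.mem_singleton, hT, Finset.mem_map,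
            Finset.mem_univ, true_and, hc', Function.Embedding.trans_apply,
            Fin.succAboveEmb_apply]
          constructor
          · rintro ⟨⟨k', rfl⟩, hne⟩
            have hk' : k' ≠ k := fun h => hne (by rw [h])
            obtain ⟨j, hj⟩ := Fin.exists_succAbove_eq hk'
            exact ⟨j, by rw [hj]⟩
          · rintro ⟨j, rfl⟩
            exact ⟨⟨_, rfl⟩, fun h => Fin.succAbove_ne k j (c.injective h)⟩
        rw [hset, ih.2 c' _ (fun i => u i.succ)]
        congr 1
        have hext : Function.extend c' (fun i => u i.succ)
              (fun i' => if i' ∈ ({c k} : Finset (Fin n)) then u 0 else v i')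
            = (Function.extend c u v) ∘ (Equiv.Perm.viaEmbedding k.cycleRange c) := by
          funext i
          by_cases hi : ∃ k', c k' = i
          · obtain ⟨k', rfl⟩ := hi
            rw [Function.comp_apply, Equiv.Perm.viaEmbedding_apply,
              Function.Injective.extend_apply c.injective]
            rcases eq_or_ne k' k with rfl | hne
            · rw [Fin.cycleRange_self]
              rw [Function.extend_apply' _ _ _
                (by rintro ⟨j, hj⟩; exact Fin.succAbove_ne k' j (c.injective hj))]
              simp
            · obtain ⟨j, rfl⟩ := Fin.exists_succAbove_eq hne
              have hcc : c (k.succAbove j) = c' j := rfl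
              rw [hcc, Function.Injective.extend_apply c'.injective, Fin.cycleRange_succAbove]
          · rw [Function.comp_apply,
              Equiv.Perm.viaEmbedding_apply_of_notMem _ _ _ (by simpa using hi),
              Function.extend_apply' _ _ _ hi,
              Function.extend_apply' _ _ _ (by rintro ⟨j, hj⟩; exact hi ⟨_, hj⟩)]
            have : i ≠ c k := fun h => hi ⟨k, h.symm⟩
            simp [this]
        rw [hext, hsymm]
      rw [Finset.sum_congr rfl (fun k _ => hterm k)]
      rw [Finset.sum_const, Finset.card_univ, Fintype.card_fin, smul_smul,
        Nat.factorial_succ]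
end Key

theorem stmt_4 {G S : Type*} [AddCommSemigroup G] [AddCommGroup S]
    (n : ℕ) (hn : 0 < n) (A : (Fin n → G) → S)
    (hsymm : ∀ (σ : Equiv.Perm (Fin n)) (v : Fin n → G), A (v ∘ σ) = A v)
    (hadd : ∀ (v : Fin n → G) (i : Fin n) (a b : G),
      A (Function.update v i (a + b)) =
        A (Function.update v i a) + A (Function.update v i b))
    (x : G) (y : Fin n → G) :
    ((List.ofFn y).foldr deltaOp (fun z => A fun _ => z)) x = n.factorial • A y := by
  have h := (key A hsymm hadd n).2 (Function.Embedding.refl (Fin n)) y y x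
  have hbase : (fun z => A fun i =>
      if i ∈ Finset.univ.map (Function.Embedding.refl (Fin n)) then z else y i)
      = fun z => A fun _ => z := by
    funext z
    congr 1
    funext i
    simp
  have hext : Function.extend (⇑(Function.Embedding.refl (Fin n))) y y = y := by
    funext i
    exact Function.Injective.extend_apply (Function.Embedding.refl (Fin n)).injective y y i
  rw [hbase, hext] at h
  exact h
end

section
/- (Polarization vanishing) Let G be a commutative semigroup, S a commutative group, and A : G^n → S a symmetric n-additive function with diagonalization A*. Then for m > n and all x, y₁,…,yₘ ∈ G, the iterated difference Δ_{y₁}⋯Δ_{yₘ} A*(x) = 0. -/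
/-!
Restrict `A` to the diagonal only on a set `t` of coordinates, keeping the others fixed:
`x ↦ A (t.piecewise (fun _ => x) w)`. By multiadditivity, `Δ_y` of this function is the sum,
over the nonempty `s ⊆ t`, of the same kind of function with `y` put into the coordinates
of `s` and the diagonal shrunk to `t \ s`. Induction on `t` shows that `#t + 1` differences
annihilate it, and `t = univ` is `A*`.
-/

open Finset Function

section Differences

variable {G S : Type*} [Add G] [AddCommGroup S]

lemma foldr_deltaOp_zero (ys : List G) : ys.foldr deltaOp (0 : G → S) = 0 := by
  induction ys with
  | nil => rfl
  | cons y ys ih => funext x; simp [deltaOp, ih]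

lemma foldr_deltaOp_add (ys : List G) (f g : G → S) :
    ys.foldr deltaOp (f + g) = ys.foldr deltaOp f + ys.foldr deltaOp g := by
  induction ys with
  | nil => rfl
  | cons y ys ih => funext x; simp [deltaOp, ih, add_sub_add_comm]

variable (G S) in
/-- The generalized polynomials of degree `< k`, in the sense of Fréchet and Djoković. -/
def polynomialsDegreeLT (k : ℕ) : AddSubmonoid (G → S) where
  carrier := {f | ∀ ys : List G, k ≤ ys.length → ys.foldr deltaOp f = 0}
  zero_mem' ys _ := foldr_deltaOp_zero ys
  add_mem' hf hg ys hys := by rw [foldr_deltaOp_add, hf ys hys, hg ys hys, add_zero]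

lemma polynomialsDegreeLT_mono {k l : ℕ} (hkl : k ≤ l) :
    polynomialsDegreeLT G S k ≤ polynomialsDegreeLT G S l :=
  fun _ hf ys hys => hf ys (hkl.trans hys)

lemma mem_polynomialsDegreeLT_succ {k : ℕ} {f : G → S}
    (hf : ∀ y, deltaOp y f ∈ polynomialsDegreeLT G S k) :
    f ∈ polynomialsDegreeLT G S (k + 1) := by
  intro ys hys
  obtain ⟨ys', y, rfl⟩ := (List.eq_nil_or_concat ys).resolve_left (by rintro rfl; simp at hys)
  simpa [List.foldr_append] using hf y ys' (by simpa using hys)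

end Differences

section Multiadditive

variable {ι G S : Type*} [DecidableEq ι]

def IsMultiadditive [Add G] [Add S] (A : (ι → G) → S) : Prop :=
  ∀ (v : ι → G) (i : ι) (a b : G),
    A (update v i (a + b)) = A (update v i a) + A (update v i b)

theorem IsMultiadditive.map_piecewise_add [Add G] [AddCommMonoid S] {A : (ι → G) → S}
    (hA : IsMultiadditive A) (m m' : ι → G) (t : Finset ι) :
    A (t.piecewise (m + m') m') = ∑ s ∈ t.powerset, A (s.piecewise m m') := by
  induction t using Finset.induction_on generalizing m' with
  | empty => simp
  | @insert i t hit ih =>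
    have hins : (insert i t).piecewise (m + m') m'
        = update (t.piecewise (m + m') m') i (m i + m' i) := t.piecewise_insert _ _ _
    have hm' : update (t.piecewise (m + m') m') i (m' i) = t.piecewise (m + m') m' := by
      ext j; by_cases h : j = i <;> simp [h, hit]
    set m'' := update m' i (m i)
    have hm : update (t.piecewise (m + m') m') i (m i) = t.piecewise (m + m'') m'' := by
      ext j; by_cases h : j = i
      · simp [m'', h, hit]
      · by_cases h' : j ∈ t <;> simp [m'', h, h']
    rw [hins, hA, hm', hm, sum_powerset_insert hit, ih, ih, add_comm]
    congr 1
    refine sum_congr rfl fun s hs => ?_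
    have : (insert i s).piecewise m m' = s.piecewise m m'' := by
      ext j; by_cases h : j = i
      · simp [m'', h, notMem_of_mem_powerset_of_notMem hs hit]
      · by_cases h' : j ∈ s <;> simp [m'', h, h']
    rw [this]

lemma Finset.piecewise_piecewise_eq_sdiff_piecewise {π : ι → Type*} (s t : Finset ι)
    (c d w : ∀ i, π i) :
    s.piecewise c (t.piecewise d w) = (t \ s).piecewise d (s.piecewise c w) := by
  ext i
  by_cases hs : i ∈ s
  · simp [hs]
  · by_cases ht : i ∈ t <;> simp [hs, ht]

theorem IsMultiadditive.piecewise_const_mem_polynomialsDegreeLT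
    [AddCommSemigroup G] [AddCommGroup S] {A : (ι → G) → S} (hA : IsMultiadditive A)
    (t : Finset ι) (w : ι → G) :
    (fun x => A (t.piecewise (fun _ => x) w)) ∈ polynomialsDegreeLT G S (t.card + 1) := by
  induction t using Finset.strongInduction generalizing w with
  | H t ih =>
    refine mem_polynomialsDegreeLT_succ fun y => ?_
    have hΔ : deltaOp y (fun x => A (t.piecewise (fun _ => x) w)) =
        ∑ s ∈ t.powerset.erase ∅,
          fun x => A ((t \ s).piecewise (fun _ => x) (s.piecewise (fun _ => y) w)) := by
      funext x
      have hsplit : t.piecewise (fun _ => x + y) w =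
          t.piecewise ((fun _ => y) + t.piecewise (fun _ => x) w) (t.piecewise (fun _ => x) w) := by
        ext i; by_cases hi : i ∈ t <;> simp [hi, add_comm]
      rw [deltaOp, hsplit, hA.map_piecewise_add, ← add_sum_erase _ _ (empty_mem_powerset t),
        piecewise_empty, add_sub_cancel_left, Finset.sum_apply]
      exact sum_congr rfl fun s _ => by rw [piecewise_piecewise_eq_sdiff_piecewise]
    rw [hΔ]
    refine sum_mem fun s hs => ?_
    have hst : t \ s ⊂ t := sdiff_ssubset (mem_powerset.mp (mem_of_mem_erase hs))
      (nonempty_iff_ne_empty.mpr (ne_of_mem_erase hs))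
    exact polynomialsDegreeLT_mono (card_lt_card hst) (ih _ hst _)

end Multiadditive

theorem stmt_5_general {G S : Type*} [AddCommSemigroup G] [AddCommGroup S]
    (n m : ℕ) (hm : n < m) (A : (Fin n → G) → S)
    (hadd : ∀ (v : Fin n → G) (i : Fin n) (a b : G),
      A (Function.update v i (a + b)) =
        A (Function.update v i a) + A (Function.update v i b))
    (x : G) (y : Fin m → G) :
    ((List.ofFn y).foldr deltaOp (fun z => A fun _ => z)) x = 0 := by
  have hdiag := IsMultiadditive.piecewise_const_mem_polynomialsDegreeLT hadd univ (fun _ => x)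
  simp only [piecewise_univ, card_univ, Fintype.card_fin] at hdiag
  rw [hdiag (List.ofFn y) (by simpa using hm)]
  rfl

theorem stmt_5 {G S : Type*} [AddCommSemigroup G] [AddCommGroup S]
    (n m : ℕ) (hn : 0 < n) (hm : n < m) (A : (Fin n → G) → S)
    (hsymm : ∀ (σ : Equiv.Perm (Fin n)) (v : Fin n → G), A (v ∘ σ) = A v)
    (hadd : ∀ (v : Fin n → G) (i : Fin n) (a b : G),
      A (Function.update v i (a + b)) =
        A (Function.update v i a) + A (Function.update v i b))
    (x : G) (y : Fin m → G) :
    ((List.ofFn y).foldr deltaOp (fun z => A fun _ => z)) x = 0 :=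
  stmt_5_general n m hm A hadd x y
end

section
/- Let G be a commutative semigroup in which multiplication by n! is surjective, or S a commutative group in which multiplication by n! is injective. If A : G^n → S is a symmetric n-additive function whose diagonalization A*(x) = A(x,…,x) is identically zero, then A is identically zero. -/
theorem stmt_6 {G S : Type*} [AddCommMonoid G] [AddCommGroup S]
    (n : ℕ) (hn : 0 < n) (A : (Fin n → G) → S)
    (hsurj_or_inj :
      (∀ g : G, ∃ h : G, n.factorial • h = g) ∨ (∀ s : S, n.factorial • s = 0 → s = 0))
    (hsymm : ∀ (σ : Equiv.Perm (Fin n)) (v : Fin n → G), A (v ∘ σ) = A v)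
    (hadd : ∀ (v : Fin n → G) (i : Fin n) (a b : G),
      A (Function.update v i (a + b)) =
        A (Function.update v i a) + A (Function.update v i b))
    (hdiag : ∀ x : G, A (fun _ => x) = 0) :
    ∀ v : Fin n → G, A v = 0 := by
  classical
  -- A vanishes when a coordinate is 0
  have hzero : ∀ (v : Fin n → G) (i : Fin n), A (Function.update v i 0) = 0 := by
    intro v i
    have h := hadd v i 0 0
    rw [add_zero] at h
    have h2 : A (Function.update v i 0) + 0 =
        A (Function.update v i 0) + A (Function.update v i 0) := by
      rw [add_zero]; exact h
    exact (add_left_cancel h2).symm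
  -- A is ℕ-homogeneous in each coordinate
  have hsmul : ∀ (v : Fin n → G) (i : Fin n) (c : ℕ) (x : G),
      A (Function.update v i (c • x)) = c • A (Function.update v i x) := by
    intro v i c x
    induction c with
    | zero => simpa using hzero v i
    | succ k ih =>
        rw [succ_nsmul, hadd, ih, succ_nsmul]
  -- package A as a multilinear map over ℕ
  let M : MultilinearMap ℕ (fun _ : Fin n => G) S :=
    { toFun := A
      map_update_add' := by intro _ m i x y; convert hadd m i x y using 3 <;> congr!
      map_update_smul' := by intro _ m i c x; convert hsmul m i c x using 3 <;> congr! }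
  have hMA : ∀ v, M v = A v := fun _ => rfl
  -- key: n! • A v = 0 for all v
  have key : ∀ v : Fin n → G, n.factorial • A v = 0 := by
    intro v
    have expand : ∀ T : Finset (Fin n),
        A (fun _ => ∑ j ∈ T, v j) =
          ∑ r ∈ Fintype.piFinset (fun _ : Fin n => T), A (fun i => v (r i)) := by
      intro T
      have := M.map_sum_finset (fun _ j => v j) (fun _ => T)
      simpa [hMA] using this
    -- the inclusion-exclusion coefficient
    have coeff : ∀ r : Fin n → Fin n,
        (∑ T : Finset (Fin n), if ∀ i, r i ∈ T then (-1 : ℤ) ^ (Tᶜ.card) else 0)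
          = if Function.Surjective r then 1 else 0 := by
      intro r
      rw [← Finset.sum_filter]
      have hb : ∑ T ∈ Finset.univ.filter (fun T : Finset (Fin n) => ∀ i, r i ∈ T),
          (-1 : ℤ) ^ (Tᶜ.card)
          = ∑ U ∈ ((Finset.univ.image r)ᶜ).powerset, (-1 : ℤ) ^ U.card := by
        refine Finset.sum_nbij' (fun T => Tᶜ) (fun U => Uᶜ) ?_ ?_ ?_ ?_ ?_
        · intro T hT
          simp only [Finset.mem_filter, Finset.mem_univ, true_and] at hT
          rw [Finset.mem_powerset]
          apply Finset.compl_subset_compl.mpr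
          rw [Finset.image_subset_iff]
          exact fun x _ => hT x
        · intro U hU
          simp only [Finset.mem_filter, Finset.mem_univ, true_and]
          rw [Finset.mem_powerset] at hU
          intro i
          have : Finset.univ.image r ⊆ Uᶜ := by
            rw [← compl_compl (Finset.univ.image r)]
            exact Finset.compl_subset_compl.mpr hU
          exact this (Finset.mem_image_of_mem r (Finset.mem_univ i))
        · intro T _; exact compl_compl T
        · intro U _; exact compl_compl U
        · intro T _; rfl
      rw [hb, Finset.sum_powerset_neg_one_pow_card]
      by_cases hr : Function.Surjective r
      · rw [if_pos hr, if_pos]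
        rw [Finset.compl_eq_empty_iff, Finset.eq_univ_iff_forall]
        intro x
        obtain ⟨i, hi⟩ := hr x
        exact Finset.mem_image.mpr ⟨i, Finset.mem_univ i, hi⟩
      · rw [if_neg hr, if_neg]
        intro hc
        apply hr
        intro x
        rw [Finset.compl_eq_empty_iff, Finset.eq_univ_iff_forall] at hc
        obtain ⟨i, -, hi⟩ := Finset.mem_image.mp (hc x)
        exact ⟨i, hi⟩
    have h1 : (0 : S) = ∑ r : Fin n → Fin n,
        (if Function.Surjective r then (1 : ℤ) else 0) • A (fun i => v (r i)) := by
      calc (0 : S) = ∑ T : Finset (Fin n), (-1 : ℤ) ^ (Tᶜ.card) • A (fun _ => ∑ j ∈ T, v j) := by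
            simp [hdiag]
        _ = ∑ T : Finset (Fin n), ∑ r : Fin n → Fin n,
              (if ∀ i, r i ∈ T then (-1 : ℤ) ^ (Tᶜ.card) • A (fun i => v (r i)) else 0) := by
            refine Finset.sum_congr rfl fun T _ => ?_
            rw [expand T, Finset.smul_sum, ← Finset.sum_filter]
            apply Finset.sum_congr
            · ext r
              simp [Fintype.mem_piFinset]
            · intros; rfl
        _ = ∑ r : Fin n → Fin n, ∑ T : Finset (Fin n),
              (if ∀ i, r i ∈ T then (-1 : ℤ) ^ (Tᶜ.card) else 0) • A (fun i => v (r i)) := by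
            rw [Finset.sum_comm]
            refine Finset.sum_congr rfl fun r _ => Finset.sum_congr rfl fun T _ => ?_
            split_ifs <;> simp
        _ = ∑ r : Fin n → Fin n,
              (if Function.Surjective r then (1 : ℤ) else 0) • A (fun i => v (r i)) := by
            refine Finset.sum_congr rfl fun r _ => ?_
            rw [← Finset.sum_smul, coeff r]
    have h2 : ∑ r : Fin n → Fin n,
        (if Function.Surjective r then (1 : ℤ) else 0) • A (fun i => v (r i))
        = ∑ r ∈ Finset.univ.filter (fun r : Fin n → Fin n => Function.Surjective r),
            A (fun i => v (r i)) := by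
      rw [Finset.sum_filter]
      refine Finset.sum_congr rfl fun r _ => ?_
      split_ifs <;> simp
    have h3 : ∑ r ∈ Finset.univ.filter (fun r : Fin n → Fin n => Function.Surjective r),
        A (fun i => v (r i)) = ∑ _σ : Equiv.Perm (Fin n), A v := by
      refine Finset.sum_bij'
        (fun r hr => Equiv.ofBijective r
          (Finite.surjective_iff_bijective.mp (Finset.mem_filter.mp hr).2))
        (fun σ _ => ⇑σ) ?_ ?_ ?_ ?_ ?_
      · intro r hr; exact Finset.mem_univ _
      · intro σ _
        simp only [Finset.mem_filter, Finset.mem_univ, true_and]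
        exact σ.surjective
      · intro r hr; rfl
      · intro σ _
        ext x
        rfl
      · intro r hr
        have := hsymm (Equiv.ofBijective r
          (Finite.surjective_iff_bijective.mp (Finset.mem_filter.mp hr).2)) v
        rw [← this]
        rfl
    have h4 : ∑ _σ : Equiv.Perm (Fin n), A v = n.factorial • A v := by
      rw [Finset.sum_const, Finset.card_univ, Fintype.card_perm, Fintype.card_fin]
    rw [← h4, ← h3, ← h2, ← h1]
  intro v
  rcases hsurj_or_inj with hsurj | hinj
  · obtain ⟨h, hh⟩ := hsurj (v ⟨0, hn⟩)
    have : A v = A (Function.update v ⟨0, hn⟩ (n.factorial • h)) := by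
      rw [hh, Function.update_eq_self]
    rw [this, hsmul]
    exact key _
  · exact hinj _ (key v)
end

section
/- Let d : ℂ → ℂ be a derivation, p₁ ≥ 1, q₁ ≥ 1 integers with p₂ = p₁ − 1 ≥ 1, and λ₁₁, λ̃₁₁, λ₂₀, λ̃₂₁ nonzero complex numbers with p₁·λ₁₁·(λ̃₁₁)^{q₁} + λ₂₀·(λ̃₂₁)^{q₁+1} = 0, and let λ₁₀, λ̃₁₀, λ̃₂₀ be complex numbers with λ₁₀/(p₁λ₁₁) = λ̃₁₀/λ̃₁₁ = λ̃₂₀/λ̃₂₁. Set f₁(x) = λ₁₁ d(x) + λ₁₀ x, g₁(x) = λ̃₁₁ d(x) + λ̃₁₀ x, f₂(x) = λ₂₀ x, g₂(x) = λ̃₂₁ d(x) + λ̃₂₀ x. Then f₁(x^{p₁})·g₁(x)^{q₁} + f₂(x^{p₁−1})·g₂(x)^{q₁+1} = 0 for all x. -/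
theorem stmt_15 (d : ℂ → ℂ)
    (hdadd : ∀ x y : ℂ, d (x + y) = d x + d y)
    (hdleib : ∀ x y : ℂ, d (x * y) = x * d y + d x * y)
    (p₁ q₁ : ℕ) (hp₁ : 2 ≤ p₁) (hq₁ : 1 ≤ q₁)
    (l₁₁ l₁₀ lt₁₁ lt₁₀ l₂₀ lt₂₁ lt₂₀ : ℂ)
    (hl₁₁ : l₁₁ ≠ 0) (hlt₁₁ : lt₁₁ ≠ 0) (hl₂₀ : l₂₀ ≠ 0) (hlt₂₁ : lt₂₁ ≠ 0)
    (hmain : (p₁ : ℂ) * l₁₁ * lt₁₁ ^ q₁ + l₂₀ * lt₂₁ ^ (q₁ + 1) = 0)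
    (hshift₁ : l₁₀ / ((p₁ : ℂ) * l₁₁) = lt₁₀ / lt₁₁)
    (hshift₂ : lt₁₀ / lt₁₁ = lt₂₀ / lt₂₁) :
    ∀ x : ℂ,
      (l₁₁ * d (x ^ p₁) + l₁₀ * x ^ p₁) * (lt₁₁ * d x + lt₁₀ * x) ^ q₁ +
        (l₂₀ * x ^ (p₁ - 1)) * (lt₂₁ * d x + lt₂₀ * x) ^ (q₁ + 1) = 0 := by
  -- power rule
  have hpow : ∀ (m : ℕ) (x : ℂ), d (x ^ (m + 1)) = (m + 1 : ℂ) * x ^ m * d x := by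
    intro m
    induction m with
    | zero => intro x; simp
    | succ n ih =>
      intro x
      have : x ^ (n + 2) = x ^ (n + 1) * x := by ring
      rw [this, hdleib, ih]
      push_cast
      ring
  set a := lt₁₀ / lt₁₁ with ha
  have hp₁' : (p₁ : ℂ) * l₁₁ ≠ 0 := by
    apply mul_ne_zero _ hl₁₁
    exact_mod_cast Nat.cast_ne_zero.mpr (by omega)
  have h1 : l₁₀ = a * ((p₁ : ℂ) * l₁₁) := (div_eq_iff hp₁').mp hshift₁
  have h2 : lt₁₀ = a * lt₁₁ := by
    rw [ha]; field_simp
  have h3 : lt₂₀ = a * lt₂₁ := ((div_eq_iff hlt₂₁).mp hshift₂.symm).symm.symm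
  intro x
  obtain ⟨m, rfl⟩ : ∃ m, p₁ = m + 1 := ⟨p₁ - 1, by omega⟩
  rw [hpow, h1, h2, h3]
  have key : ∀ k : ℕ, (lt₁₁ * d x + a * lt₁₁ * x) ^ k = lt₁₁ ^ k * (d x + a * x) ^ k := by
    intro k; rw [← mul_pow]; ring_nf
  have key2 : ∀ k : ℕ, (lt₂₁ * d x + a * lt₂₁ * x) ^ k = lt₂₁ ^ k * (d x + a * x) ^ k := by
    intro k; rw [← mul_pow]; ring_nf
  rw [key, key2]
  simp only [Nat.add_sub_cancel]
  push_cast at hmain ⊢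
  linear_combination (x ^ m * (d x + a * x) ^ (q₁ + 1)) * hmain
end

section
/- Let P₁(Y) = λ₁₀Y^{p₁} + λ₂₀ and P₂(Y) = λ̃₁₀Y^{p₂} + λ̃₂₀ be complex polynomials with all four coefficients nonzero, and Q₁(Y) = (μ₁₀Y + μ₂₀)^{q₁}, Q₂(Y) = (μ̃₁₀Y + μ̃₂₀)^{q₂} with μ₁₀, μ₂₀, μ̃₁₀, μ̃₂₀ nonzero, where p₁ < p₂, q₂ < q₁, p₁ + q₁ = p₂ + q₂. If P₁(Y)Q₁(Y) = −P₂(Y)Q₂(Y) identically, then q₁ = q₂ + 1 and p₂ = p₁ + 1. -/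
/-!
Let `r` be the root of `m₁₀ X + m₂₀`. It is a root of the left-hand side of multiplicity at
least `q₁`. On the right, the binomial `lt₁₀ X ^ p₂ + lt₂₀` is separable, so it contributes
multiplicity at most `1`, and the `q₂`-th power of a polynomial of degree at most one contributes
at most `q₂`. Hence `q₁ ≤ q₂ + 1`, and the rest is arithmetic.
-/

namespace Polynomial

theorem rootMultiplicity_neg {R : Type*} [CommRing R] (p : R[X]) (a : R) :
    rootMultiplicity a (-p) = rootMultiplicity a p := by
  classical
  simp only [rootMultiplicity_eq_multiplicity, neg_eq_zero, multiplicity_neg]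

theorem rootMultiplicity_le_natDegree {R : Type*} [CommRing R] [IsDomain R] (p : R[X]) (a : R) :
    rootMultiplicity a p ≤ p.natDegree := by
  classical
  exact count_roots (a := a) p ▸ (Multiset.count_le_card a p.roots).trans (card_roots' p)

theorem rootMultiplicity_pow_le_of_natDegree_le_one {R : Type*} [CommRing R] [IsDomain R]
    {p : R[X]} (hp : p.natDegree ≤ 1) (n : ℕ) (a : R) : rootMultiplicity a (p ^ n) ≤ n :=
  (rootMultiplicity_le_natDegree _ a).trans <|
    natDegree_pow_le.trans (mul_le_of_le_one_right n.zero_le hp)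

theorem C_mul_X_pow_add_C_eq {K : Type*} [Field K] {a : K} (ha : a ≠ 0) (b : K) (n : ℕ) :
    C a * X ^ n + C b = C a * (X ^ n - C (-b / a)) := by
  rw [mul_sub, ← C_mul, mul_div_cancel₀ _ ha, C_neg, sub_neg_eq_add]

theorem C_mul_X_add_C_eq {K : Type*} [Field K] {a : K} (ha : a ≠ 0) (b : K) :
    C a * X + C b = C a * (X - C (-b / a)) := by
  simpa using C_mul_X_pow_add_C_eq ha b 1

theorem separable_C_mul_X_pow_add_C {K : Type*} [Field K] [CharZero K] {a b : K}
    (ha : a ≠ 0) (hb : b ≠ 0) {n : ℕ} (hn : n ≠ 0) : (C a * X ^ n + C b).Separable := by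
  rw [C_mul_X_pow_add_C_eq ha]
  exact (separable_X_pow_sub_C _ (Nat.cast_ne_zero.2 hn) (by simp [ha, hb])).unit_mul
    (isUnit_C.2 ha.isUnit)

end Polynomial

open Polynomial in
theorem stmt_16_general (p₁ p₂ q₁ q₂ : ℕ) (hp : p₁ < p₂) (hq : q₂ < q₁)
    (hpq : p₁ + q₁ = p₂ + q₂)
    (l₁₀ l₂₀ lt₁₀ lt₂₀ m₁₀ m₂₀ mt₁₀ mt₂₀ : ℂ)
    (hlt₁₀ : lt₁₀ ≠ 0) (hlt₂₀ : lt₂₀ ≠ 0)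
    (hm₁₀ : m₁₀ ≠ 0) (hmt₁₀ : mt₁₀ ≠ 0)
    (hid : (C l₁₀ * X ^ p₁ + C l₂₀) * (C m₁₀ * X + C m₂₀) ^ q₁ =
      -((C lt₁₀ * X ^ p₂ + C lt₂₀) * (C mt₁₀ * X + C mt₂₀) ^ q₂)) :
    q₁ = q₂ + 1 ∧ p₂ = p₁ + 1 := by
  suffices q₁ ≤ q₂ + 1 by omega
  set r := -m₂₀ / m₁₀
  have hP₂ := separable_C_mul_X_pow_add_C hlt₁₀ hlt₂₀ (n := p₂) (by omega)
  have hRHS : (C lt₁₀ * X ^ p₂ + C lt₂₀) * (C mt₁₀ * X + C mt₂₀) ^ q₂ ≠ 0 := by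
    refine mul_ne_zero hP₂.ne_zero (pow_ne_zero _ ?_)
    rw [C_mul_X_add_C_eq hmt₁₀]
    exact mul_ne_zero (C_ne_zero.2 hmt₁₀) (X_sub_C_ne_zero _)
  have hlow : q₁ ≤ rootMultiplicity r ((C l₁₀ * X ^ p₁ + C l₂₀) * (C m₁₀ * X + C m₂₀) ^ q₁) := by
    rw [le_rootMultiplicity_iff (hid ▸ neg_ne_zero.2 hRHS), C_mul_X_add_C_eq hm₁₀, mul_pow]
    exact (dvd_mul_left _ _).mul_left _
  have hup : rootMultiplicity r (-((C lt₁₀ * X ^ p₂ + C lt₂₀) * (C mt₁₀ * X + C mt₂₀) ^ q₂))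
      ≤ 1 + q₂ := by
    rw [rootMultiplicity_neg, rootMultiplicity_mul hRHS]
    exact add_le_add (rootMultiplicity_le_one_of_separable hP₂ r)
      (rootMultiplicity_pow_le_of_natDegree_le_one natDegree_linear_le q₂ r)
  rw [hid] at hlow
  omega

open Polynomial in
theorem stmt_16 (p₁ p₂ q₁ q₂ : ℕ) (hp : p₁ < p₂) (hq : q₂ < q₁)
    (hpq : p₁ + q₁ = p₂ + q₂)
    (l₁₀ l₂₀ lt₁₀ lt₂₀ m₁₀ m₂₀ mt₁₀ mt₂₀ : ℂ)
    (hl₁₀ : l₁₀ ≠ 0) (hl₂₀ : l₂₀ ≠ 0) (hlt₁₀ : lt₁₀ ≠ 0) (hlt₂₀ : lt₂₀ ≠ 0)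
    (hm₁₀ : m₁₀ ≠ 0) (hm₂₀ : m₂₀ ≠ 0) (hmt₁₀ : mt₁₀ ≠ 0) (hmt₂₀ : mt₂₀ ≠ 0)
    (hid : (C l₁₀ * X ^ p₁ + C l₂₀) * (C m₁₀ * X + C m₂₀) ^ q₁ =
      -((C lt₁₀ * X ^ p₂ + C lt₂₀) * (C mt₁₀ * X + C mt₂₀) ^ q₂)) :
    q₁ = q₂ + 1 ∧ p₂ = p₁ + 1 :=
  stmt_16_general p₁ p₂ q₁ q₂ hp hq hpq l₁₀ l₂₀ lt₁₀ lt₂₀ m₁₀ m₂₀ mt₁₀ mt₂₀ hlt₁₀ hlt₂₀ hm₁₀ hmt₁₀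
    hid
end
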